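/- arXiv:1804.08991 — 3 statements merged into one kernel-verified Lean document; each statement's English description precedes it below -/
import Mathlib

section
/- For any graph G, any subset S of vertices, and any vertex x, the Staller-start game domination number satisfies \gamma_g'(G|S) \le \gamma_g'(G|(S \cup N[x])) + 2. -/
open Finset
open scoped Classical

variable {V : Type*}

/-- The closed neighborhood `N[v]` of a vertex, as a finset. -/
noncomputable def closedNbhd [Fintype V] (G : SimpleGraph V) (v : V) : Finset V :=
  Finset.univ.filter (fun u => u = v ∨ G.Adj v u)

/-- The legal moves in the domination game when `D` is the set of dominated vertices:
vertices whose closed neighborhood is not already dominated. -/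
noncomputable def legalMoves [Fintype V] (G : SimpleGraph V) (D : Finset V) : Finset V :=
  Finset.univ.filter (fun v => ¬ closedNbhd G v ⊆ D)

lemma legalMoves_nonempty [Fintype V] (G : SimpleGraph V) {D : Finset V}
    (h : D ≠ Finset.univ) : (legalMoves G D).Nonempty := by
  obtain ⟨v, hv⟩ : ∃ v, v ∉ D := by
    by_contra hc
    push_neg at hc
    exact h (Finset.eq_univ_iff_forall.2 hc)
  refine ⟨v, ?_⟩
  simp only [legalMoves, Finset.mem_filter, Finset.mem_univ, true_and]
  intro hsub
  exact hv (hsub (by simp [closedNbhd]))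

lemma card_lt_of_legal [Fintype V] (G : SimpleGraph V) {D : Finset V} {v : V}
    (hv : v ∈ legalMoves G D) :
    (Finset.univ \ (D ∪ closedNbhd G v)).card < (Finset.univ \ D).card := by
  simp only [legalMoves, Finset.mem_filter, Finset.mem_univ, true_and] at hv
  obtain ⟨u, hu1, hu2⟩ := Finset.not_subset.1 hv
  apply Finset.card_lt_card
  constructor
  · exact Finset.sdiff_subset_sdiff (le_refl _) Finset.subset_union_left
  · intro hsub
    have := hsub (Finset.mem_sdiff.2 ⟨Finset.mem_univ u, hu2⟩)
    simp only [Finset.mem_sdiff, Finset.mem_union] at this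
    exact this.2 (Or.inr hu1)

/-- Optimal number of moves in the domination game on the partially dominated graph `G|D`;
`turn = true` means Dominator (the minimizer) moves next, `turn = false` means Staller
(the maximizer) moves next.  Every move must dominate a not-yet-dominated vertex and the
game ends when all vertices are dominated. -/
noncomputable def gameVal [Fintype V] (G : SimpleGraph V) : Bool → Finset V → ℕ
  | turn, D =>
    if h : D = Finset.univ then 0
    else
      have hne : (legalMoves G D).attach.Nonempty :=
        (Finset.attach_nonempty_iff).2 (legalMoves_nonempty G h)
      if turn then
        1 + (legalMoves G D).attach.inf' hne
          (fun v => gameVal G false (D ∪ closedNbhd G v.1))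
      else
        1 + (legalMoves G D).attach.sup' hne
          (fun v => gameVal G true (D ∪ closedNbhd G v.1))
  termination_by turn D => (Finset.univ \ D).card
  decreasing_by all_goals exact card_lt_of_legal G v.2

/-- The Dominator-start game domination number `γ_g(G|S)` of the partially dominated graph. -/
noncomputable def gammaG [Fintype V] (G : SimpleGraph V) (S : Finset V) : ℕ :=
  gameVal G true S

/-- The Staller-start game domination number `γ_g'(G|S)` of the partially dominated graph. -/
noncomputable def gammaG' [Fintype V] (G : SimpleGraph V) (S : Finset V) : ℕ :=
  gameVal G false S

/-- Optimal number of (non-pass) moves in the Staller `p`-pass domination game on `G|D`: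
the Dominator-start game in which Staller may additionally pass at most `p` times. -/
noncomputable def passVal [Fintype V] (G : SimpleGraph V) : Bool → ℕ → Finset V → ℕ
  | turn, p, D =>
    if h : D = Finset.univ then 0
    else
      have hne : (legalMoves G D).attach.Nonempty :=
        (Finset.attach_nonempty_iff).2 (legalMoves_nonempty G h)
      if turn then
        1 + (legalMoves G D).attach.inf' hne
          (fun v => passVal G false p (D ∪ closedNbhd G v.1))
      else
        match p with
        | 0 =>
          1 + (legalMoves G D).attach.sup' hne
            (fun v => passVal G true 0 (D ∪ closedNbhd G v.1))
        | q + 1 =>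
          max
            (1 + (legalMoves G D).attach.sup' hne
              (fun v => passVal G true (q + 1) (D ∪ closedNbhd G v.1)))
            (passVal G true q D)
  termination_by turn p D => ((Finset.univ \ D).card, p)
  decreasing_by
  · exact Prod.Lex.left _ _ (card_lt_of_legal G v.2)
  · exact Prod.Lex.left _ _ (card_lt_of_legal G v.2)
  · exact Prod.Lex.left _ _ (card_lt_of_legal G v.2)
  · exact Prod.Lex.right _ (Nat.lt_succ_self q)

/-- `γ_g^{St,p}(G)`: the Staller `p`-pass game domination number. -/
noncomputable def gammaPass [Fintype V] (G : SimpleGraph V) (p : ℕ) : ℕ :=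
  passVal G true p ∅

/-- Value (in `ℤ`) of the Dominator `1`-pass game on `G|D` in which the payoff is the
number of moves made minus the number of passes used by Dominator; Dominator minimizes,
Staller maximizes.  `turn = true` means it is Dominator's move, `pass = true` means the
pass is still available to Dominator. -/
noncomputable def domPassVal [Fintype V] (G : SimpleGraph V) : Bool → Bool → Finset V → ℤ
  | turn, pass, D =>
    if h : D = Finset.univ then 0
    else
      have hne : (legalMoves G D).attach.Nonempty :=
        (Finset.attach_nonempty_iff).2 (legalMoves_nonempty G h)
      if turn then
        match pass with
        | false =>
          1 + (legalMoves G D).attach.inf' hne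
            (fun v => domPassVal G false false (D ∪ closedNbhd G v.1))
        | true =>
          min
            (1 + (legalMoves G D).attach.inf' hne
              (fun v => domPassVal G false true (D ∪ closedNbhd G v.1)))
            (domPassVal G false false D - 1)
      else
        1 + (legalMoves G D).attach.sup' hne
          (fun v => domPassVal G true pass (D ∪ closedNbhd G v.1))
  termination_by turn pass D => ((Finset.univ \ D).card, pass.toNat)
  decreasing_by
  · exact Prod.Lex.left _ _ (card_lt_of_legal G v.2)
  · exact Prod.Lex.left _ _ (card_lt_of_legal G v.2)
  · exact Prod.Lex.right _ (by norm_num)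
  · exact Prod.Lex.left _ _ (card_lt_of_legal G v.2)

/-- A graph is a double-Staller graph if, in the Dominator `1`-pass game, Staller has a
strategy forcing at least `γ_g(G) + p` moves, where `p ∈ {0,1}` is the number of passes
used by Dominator.  Equivalently, the optimal value of "moves minus Dominator passes" in
that game is at least `γ_g(G)`. -/
def IsDoubleStaller [Fintype V] (G : SimpleGraph V) : Prop :=
  (gammaG G ∅ : ℤ) ≤ domPassVal G true true ∅

/-- An edge cut of `G`: a set of edges whose removal disconnects `G`. -/
def IsEdgeCut (G : SimpleGraph V) (C : Set (Sym2 V)) : Prop :=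
  C ⊆ G.edgeSet ∧ ¬ (G.deleteEdges C).Connected

/-- A minimal edge cut: no proper subset is an edge cut. -/
def IsMinimalEdgeCut (G : SimpleGraph V) (C : Set (Sym2 V)) : Prop :=
  IsEdgeCut G C ∧ ∀ C' ⊂ C, ¬ IsEdgeCut G C'

/-- A minimum edge cut: an edge cut of the smallest possible cardinality (this
cardinality is the edge-connectivity `κ'(G)`). -/
def IsMinimumEdgeCut (G : SimpleGraph V) (C : Set (Sym2 V)) : Prop :=
  IsEdgeCut G C ∧ ∀ C', IsEdgeCut G C' → C.ncard ≤ C'.ncard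

/-- A graph is traceable if it contains a Hamiltonian path. -/
def Traceable (G : SimpleGraph V) : Prop :=
  ∃ (a b : V) (p : G.Walk a b), p.IsHamiltonian
/-- The disjoint union of two graphs. -/
def sumGraph {V₁ V₂ : Type*} (G₁ : SimpleGraph V₁) (G₂ : SimpleGraph V₂) :
    SimpleGraph (V₁ ⊕ V₂) :=
  SimpleGraph.fromRel (fun a b =>
    match a, b with
    | Sum.inl u, Sum.inl w => G₁.Adj u w
    | Sum.inr u, Sum.inr w => G₂.Adj u w
    | _, _ => False)

/-- The graph `H_{x,3}`: two disjoint copies of `H` (the first copy on `Sum.inl ∘ Sum.inl`,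
the second on `Sum.inl ∘ Sum.inr`) joined by a path of length 3 from `x` to its copy `x'`
through the two internal vertices `y = Sum.inr 0` (adjacent to `x`) and
`y' = Sum.inr 1` (adjacent to `x'`). -/
def Hx3 (H : SimpleGraph V) (x : V) : SimpleGraph ((V ⊕ V) ⊕ Fin 2) :=
  SimpleGraph.fromRel (fun a b =>
    match a, b with
    | Sum.inl (Sum.inl u), Sum.inl (Sum.inl w) => H.Adj u w
    | Sum.inl (Sum.inr u), Sum.inl (Sum.inr w) => H.Adj u w
    | Sum.inl (Sum.inl u), Sum.inr i => u = x ∧ i = 0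
    | Sum.inl (Sum.inr u), Sum.inr i => u = x ∧ i = 1
    | Sum.inr i, Sum.inr j => i ≠ j
    | _, _ => False)

/-- The tree `T_n`: a star `K_{1,n}` with center `Sum.inl ()`, support vertices
`Sum.inr (Sum.inl i)`, and four leaves `Sum.inr (Sum.inr (i, l))` attached to each
support vertex. -/
def Tn (n : ℕ) : SimpleGraph (Unit ⊕ (Fin n ⊕ Fin n × Fin 4)) :=
  SimpleGraph.fromRel (fun a b =>
    match a, b with
    | Sum.inl _, Sum.inr (Sum.inl _) => True
    | Sum.inr (Sum.inl i), Sum.inr (Sum.inr jl) => i = jl.1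
    | _, _ => False)

/-- The graph `K_k(H)`: the disjoint union of the complete graph `K_k` (on `Fin k`,
embedded via `Sum.inl`) and the graph `H` (embedded via `Sum.inr`), together with the
two extra edges `au` and `bv`. -/
def KkH {W : Type*} (k : ℕ) (H : SimpleGraph W) (u v : Fin k) (a b : W) :
    SimpleGraph (Fin k ⊕ W) :=
  SimpleGraph.fromRel (fun s t =>
    match s, t with
    | Sum.inl i, Sum.inl j => i ≠ j
    | Sum.inr w₁, Sum.inr w₂ => H.Adj w₁ w₂
    | Sum.inl i, Sum.inr w => (i = u ∧ w = a) ∨ (i = v ∧ w = b)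
    | _, _ => False)

lemma gameVal_univ [Fintype V] (G : SimpleGraph V) (b : Bool) :
    gameVal G b (Finset.univ : Finset V) = 0 := by
  rw [gameVal]; simp

lemma gameVal_true_eq [Fintype V] (G : SimpleGraph V) {D : Finset V} (h : D ≠ Finset.univ) :
    gameVal G true D = 1 + (legalMoves G D).attach.inf'
      ((Finset.attach_nonempty_iff).2 (legalMoves_nonempty G h))
      (fun v => gameVal G false (D ∪ closedNbhd G v.1)) := by
  rw [gameVal]; simp [h]

lemma gameVal_false_eq [Fintype V] (G : SimpleGraph V) {D : Finset V} (h : D ≠ Finset.univ) :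
    gameVal G false D = 1 + (legalMoves G D).attach.sup'
      ((Finset.attach_nonempty_iff).2 (legalMoves_nonempty G h))
      (fun v => gameVal G true (D ∪ closedNbhd G v.1)) := by
  rw [gameVal]; simp [h]

lemma legal_mono [Fintype V] (G : SimpleGraph V) {S T : Finset V} (hST : S ⊆ T) {v : V}
    (hv : v ∈ legalMoves G T) : v ∈ legalMoves G S := by
  simp only [legalMoves, Finset.mem_filter, Finset.mem_univ, true_and] at *
  exact fun h => hv (h.trans hST)

lemma not_legal_subset [Fintype V] (G : SimpleGraph V) {D : Finset V} {v : V}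
    (hv : v ∉ legalMoves G D) : closedNbhd G v ⊆ D := by
  simp only [legalMoves, Finset.mem_filter, Finset.mem_univ, true_and, not_not] at hv
  exact hv

lemma mono_main [Fintype V] (G : SimpleGraph V) :
    ∀ n (S : Finset V), (Finset.univ \ S).card ≤ n → ∀ T : Finset V, S ⊆ T →
      gameVal G true T ≤ gameVal G true S ∧
      gameVal G false T ≤ gameVal G false S ∧
      gameVal G true T ≤ gameVal G false S + 1 ∧
      gameVal G false T ≤ gameVal G true S + 1 := by
  intro n
  induction n with
  | zero =>
    intro S hS T hST
    have hSu : S = Finset.univ := by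
      have : Finset.univ \ S = ∅ := Finset.card_eq_zero.1 (Nat.le_zero.1 hS)
      have h2 : (Finset.univ : Finset V) ⊆ S := by
        intro a _; by_contra hc
        exact (Finset.eq_empty_iff_forall_notMem.1 this a)
          (Finset.mem_sdiff.2 ⟨Finset.mem_univ a, hc⟩)
      exact Finset.eq_univ_iff_forall.2 fun a => h2 (Finset.mem_univ a)
    subst hSu
    have hTu : T = Finset.univ := Finset.univ_subset_iff.1 hST
    simp [hTu, gameVal_univ]
  | succ n ih =>
    intro S hS T hST
    by_cases hSu : S = Finset.univ
    · subst hSu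
      have hTu : T = Finset.univ := Finset.univ_subset_iff.1 hST
      simp [hTu, gameVal_univ]
    have key : ∀ v ∈ legalMoves G S, (Finset.univ \ (S ∪ closedNbhd G v)).card ≤ n := by
      intro v hv
      have := card_lt_of_legal G hv
      omega
    -- statement A
    have hA : ∀ T', S ⊆ T' → gameVal G true T' ≤ gameVal G true S := by
      intro T' hST'
      obtain ⟨v, hvmem, hveq⟩ := Finset.exists_mem_eq_inf'
        ((Finset.attach_nonempty_iff).2 (legalMoves_nonempty G hSu))
        (fun v : {x // x ∈ legalMoves G S} => gameVal G false (S ∪ closedNbhd G v.1))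
      have hSval : gameVal G true S = 1 + gameVal G false (S ∪ closedNbhd G v.1) := by
        rw [gameVal_true_eq G hSu, hveq]
      by_cases hT'u : T' = Finset.univ
      · simp [hT'u, gameVal_univ]
      by_cases hleg : v.1 ∈ legalMoves G T'
      · have h1 : gameVal G true T' ≤ 1 + gameVal G false (T' ∪ closedNbhd G v.1) := by
          rw [gameVal_true_eq G hT'u]
          exact Nat.add_le_add_left
            (Finset.inf'_le _ (Finset.mem_attach _ (⟨v.1, hleg⟩ : {x // x ∈ legalMoves G T'}))) 1
        have h2 := (ih _ (key v.1 v.2) (T' ∪ closedNbhd G v.1)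
          (Finset.union_subset_union hST' (le_refl _))).2.1
        omega
      · have hsub2 : S ∪ closedNbhd G v.1 ⊆ T' :=
          Finset.union_subset hST' (not_legal_subset G hleg)
        have h3 := (ih _ (key v.1 v.2) T' hsub2).2.2.1
        omega
    refine ⟨hA T hST, ?_, ?_, ?_⟩
    · -- B
      by_cases hTu : T = Finset.univ
      · simp [hTu, gameVal_univ]
      rw [gameVal_false_eq G hTu, gameVal_false_eq G hSu]
      refine Nat.add_le_add_left (Finset.sup'_le _ _ ?_) 1
      intro u _
      have huS : u.1 ∈ legalMoves G S := legal_mono G hST u.2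
      calc gameVal G true (T ∪ closedNbhd G u.1)
          ≤ gameVal G true (S ∪ closedNbhd G u.1) :=
            (ih _ (key u.1 huS) _ (Finset.union_subset_union hST (le_refl _))).1
        _ ≤ _ := Finset.le_sup'
              (fun w : {x // x ∈ legalMoves G S} => gameVal G true (S ∪ closedNbhd G w.1))
              (Finset.mem_attach _ (⟨u.1, huS⟩ : {x // x ∈ legalMoves G S}))
    · -- C
      by_cases hTu : T = Finset.univ
      · simp [hTu, gameVal_univ]
      obtain ⟨v, hv⟩ := legalMoves_nonempty G hSu
      have hRHS : gameVal G true (S ∪ closedNbhd G v) ≤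
          (legalMoves G S).attach.sup'
            ((Finset.attach_nonempty_iff).2 (legalMoves_nonempty G hSu))
            (fun u => gameVal G true (S ∪ closedNbhd G u.1)) :=
        Finset.le_sup'
          (fun u : {x // x ∈ legalMoves G S} => gameVal G true (S ∪ closedNbhd G u.1))
          (Finset.mem_attach _ (⟨v, hv⟩ : {x // x ∈ legalMoves G S}))
      rw [gameVal_false_eq G hSu]
      by_cases hleg : v ∈ legalMoves G T
      · have h1 : gameVal G true T ≤ 1 + gameVal G false (T ∪ closedNbhd G v) := by
          rw [gameVal_true_eq G hTu]
          exact Nat.add_le_add_left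
            (Finset.inf'_le _ (Finset.mem_attach _ (⟨v, hleg⟩ : {x // x ∈ legalMoves G T}))) 1
        have h2 := (ih _ (key v hv) (T ∪ closedNbhd G v)
          (Finset.union_subset_union hST (le_refl _))).2.2.2
        omega
      · have hsub2 : S ∪ closedNbhd G v ⊆ T :=
          Finset.union_subset hST (not_legal_subset G hleg)
        have h3 := (ih _ (key v hv) T hsub2).1
        omega
    · -- D
      by_cases hTu : T = Finset.univ
      · simp [hTu, gameVal_univ]
      rw [gameVal_false_eq G hTu]
      have hsup : (legalMoves G T).attach.sup'
          ((Finset.attach_nonempty_iff).2 (legalMoves_nonempty G hTu))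
          (fun u => gameVal G true (T ∪ closedNbhd G u.1)) ≤ gameVal G true S := by
        refine Finset.sup'_le _ _ ?_
        intro u _
        have huS : u.1 ∈ legalMoves G S := legal_mono G hST u.2
        calc gameVal G true (T ∪ closedNbhd G u.1)
            ≤ gameVal G true (S ∪ closedNbhd G u.1) :=
              (ih _ (key u.1 huS) _ (Finset.union_subset_union hST (le_refl _))).1
          _ ≤ gameVal G true S := hA _ Finset.subset_union_left
      omega


/-- `γ_g'(G|S) ≤ γ_g'(G|(S ∪ N[x])) + 2`. -/
theorem stmt1 {V : Type*} [Fintype V] (G : SimpleGraph V) (S : Finset V) (x : V) :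
    gammaG' G S ≤ gammaG' G (S ∪ closedNbhd G x) + 2 := by
  by_cases hSu : S = Finset.univ
  · simp [gammaG', hSu, gameVal_univ]
  unfold gammaG'
  rw [gameVal_false_eq G hSu]
  have hbound : ∀ u ∈ (legalMoves G S).attach,
      gameVal G true (S ∪ closedNbhd G u.1) ≤ gameVal G false (S ∪ closedNbhd G x) + 1 := by
    intro u _
    set D := S ∪ closedNbhd G u.1 with hD
    by_cases hx : x ∈ legalMoves G D
    · have hDu : D ≠ Finset.univ := by
        intro h
        simp only [legalMoves, Finset.mem_filter] at hx
        exact hx.2 (h ▸ Finset.subset_univ _)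
      have h1 : gameVal G true D ≤ 1 + gameVal G false (D ∪ closedNbhd G x) := by
        rw [gameVal_true_eq G hDu]
        exact Nat.add_le_add_left
          (Finset.inf'_le _ (Finset.mem_attach _ (⟨x, hx⟩ : {w // w ∈ legalMoves G D}))) 1
      have h2 := (mono_main G _ (S ∪ closedNbhd G x) le_rfl (D ∪ closedNbhd G x)
        (Finset.union_subset_union Finset.subset_union_left (le_refl _))).2.1
      omega
    · have hsub : S ∪ closedNbhd G x ⊆ D :=
        Finset.union_subset Finset.subset_union_left (not_legal_subset G hx)
      exact (mono_main G _ _ le_rfl D hsub).2.2.1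
  have hfin := Finset.sup'_le
    ((Finset.attach_nonempty_iff).2 (legalMoves_nonempty G hSu))
    (fun v : {w // w ∈ legalMoves G S} => gameVal G true (S ∪ closedNbhd G v.1)) hbound
  omega
end

section
/- If G is a connected graph, then \gamma_g(G) \le \min over minimal edge cuts C of G of (\gamma_g(G \ C) + 2|C|), where G \ C is G with the edges of C deleted. -/
open Finset
open scoped Classical

variable {V : Type*}

section Aux
variable [Fintype V]

lemma mem_closedNbhd_self (G : SimpleGraph V) (v : V) : v ∈ closedNbhd G v := by
  simp [closedNbhd]

lemma legal_ne_univ {G : SimpleGraph V} {D : Finset V} {v : V}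
    (hv : v ∈ legalMoves G D) : D ≠ Finset.univ := by
  intro h
  subst h
  simp only [legalMoves, Finset.mem_filter, Finset.mem_univ, true_and] at hv
  exact hv (Finset.subset_univ _)

lemma not_legal_iff {G : SimpleGraph V} {D : Finset V} {v : V} :
    v ∉ legalMoves G D ↔ closedNbhd G v ⊆ D := by
  simp [legalMoves]

lemma mem_legal_iff {G : SimpleGraph V} {D : Finset V} {v : V} :
    v ∈ legalMoves G D ↔ ¬ closedNbhd G v ⊆ D := by
  simp [legalMoves]

lemma passVal_univ (G : SimpleGraph V) (t : Bool) (p : ℕ) :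
    passVal G t p Finset.univ = 0 := by
  rw [passVal]
  simp

lemma passVal_true_le {G : SimpleGraph V} {D : Finset V} {v : V} (p : ℕ)
    (hv : v ∈ legalMoves G D) :
    passVal G true p D ≤ 1 + passVal G false p (D ∪ closedNbhd G v) := by
  have hD := legal_ne_univ hv
  rw [passVal, dif_neg hD]
  simp only [if_true]
  exact Nat.add_le_add_left (Finset.inf'_le _ (Finset.mem_attach _ ⟨v, hv⟩)) 1

lemma passVal_true_exists {G : SimpleGraph V} {D : Finset V} (p : ℕ)
    (hD : D ≠ Finset.univ) :
    ∃ v ∈ legalMoves G D,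
      passVal G true p D = 1 + passVal G false p (D ∪ closedNbhd G v) := by
  rw [passVal, dif_neg hD]
  simp only [if_true]
  have hne : (legalMoves G D).attach.Nonempty :=
    (Finset.attach_nonempty_iff).2 (legalMoves_nonempty G hD)
  obtain ⟨b, hb, hbe⟩ := Finset.exists_mem_eq_inf' hne
    (fun v => passVal G false p (D ∪ closedNbhd G v.1))
  exact ⟨b.1, b.2, by rw [hbe]⟩

lemma le_passVal_false {G : SimpleGraph V} {D : Finset V} {v : V} (p : ℕ)
    (hv : v ∈ legalMoves G D) :
    1 + passVal G true p (D ∪ closedNbhd G v) ≤ passVal G false p D := by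
  have hD := legal_ne_univ hv
  conv_rhs => rw [passVal, dif_neg hD]
  simp only [if_false, Bool.false_eq_true, ite_false]
  match p with
  | 0 =>
    dsimp only
    exact Nat.add_le_add_left (Finset.le_sup'
      (fun w : {x // x ∈ legalMoves G D} => passVal G true 0 (D ∪ closedNbhd G w.1))
      (Finset.mem_attach _ ⟨v, hv⟩)) 1
  | q + 1 =>
    dsimp only
    exact le_trans
      (Nat.add_le_add_left (Finset.le_sup'
        (fun w : {x // x ∈ legalMoves G D} =>
          passVal G true (q + 1) (D ∪ closedNbhd G w.1))
        (Finset.mem_attach _ ⟨v, hv⟩)) 1)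
      (le_max_left _ _)

lemma pass_branch (G : SimpleGraph V) (q : ℕ) (D : Finset V) :
    passVal G true q D ≤ passVal G false (q + 1) D := by
  by_cases hD : D = Finset.univ
  · subst hD; rw [passVal_univ, passVal_univ]
  · conv_rhs => rw [passVal, dif_neg hD]
    simp only [if_false, Bool.false_eq_true, ite_false]
    exact le_max_right _ _

lemma passVal_false_le_zero {G : SimpleGraph V} {D : Finset V} {m : ℕ}
    (h : ∀ v ∈ legalMoves G D, 1 + passVal G true 0 (D ∪ closedNbhd G v) ≤ m) :
    passVal G false 0 D ≤ m := by
  by_cases hD : D = Finset.univ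
  · subst hD; rw [passVal_univ]; exact Nat.zero_le _
  · rw [passVal, dif_neg hD]
    simp only [if_false, Bool.false_eq_true, ite_false]
    have hne : (legalMoves G D).attach.Nonempty :=
      (Finset.attach_nonempty_iff).2 (legalMoves_nonempty G hD)
    obtain ⟨b, hb, hbe⟩ := Finset.exists_mem_eq_sup' hne
      (fun v => passVal G true 0 (D ∪ closedNbhd G v.1))
    rw [hbe]
    exact h b.1 b.2

lemma passVal_false_le_succ {G : SimpleGraph V} {D : Finset V} {q m : ℕ}
    (h1 : ∀ v ∈ legalMoves G D,
      1 + passVal G true (q + 1) (D ∪ closedNbhd G v) ≤ m)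
    (h2 : passVal G true q D ≤ m) :
    passVal G false (q + 1) D ≤ m := by
  by_cases hD : D = Finset.univ
  · subst hD; rw [passVal_univ]; exact Nat.zero_le _
  · rw [passVal, dif_neg hD]
    simp only [if_false, Bool.false_eq_true, ite_false]
    have hne : (legalMoves G D).attach.Nonempty :=
      (Finset.attach_nonempty_iff).2 (legalMoves_nonempty G hD)
    apply max_le _ h2
    obtain ⟨b, hb, hbe⟩ := Finset.exists_mem_eq_sup' hne
      (fun v => passVal G true (q + 1) (D ∪ closedNbhd G v.1))
    rw [hbe]
    exact h1 b.1 b.2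

end Aux
section Aux2
variable [Fintype V]

lemma passVal_mono (G : SimpleGraph V) (t : Bool) (p : ℕ) (D : Finset V) :
    passVal G t p D ≤ passVal G t (p + 1) D := by
  by_cases hD : D = Finset.univ
  · subst hD; rw [passVal_univ, passVal_univ]
  · match t with
    | true =>
      obtain ⟨v, hv, heq⟩ := passVal_true_exists (G := G) (D := D) (p + 1) hD
      rw [heq]
      calc passVal G true p D ≤ 1 + passVal G false p (D ∪ closedNbhd G v) :=
            passVal_true_le p hv
        _ ≤ 1 + passVal G false (p + 1) (D ∪ closedNbhd G v) :=
            Nat.add_le_add_left (passVal_mono G false p _) 1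
    | false =>
      match p with
      | 0 =>
        apply passVal_false_le_zero
        intro v hv
        calc 1 + passVal G true 0 (D ∪ closedNbhd G v)
            ≤ 1 + passVal G true 1 (D ∪ closedNbhd G v) :=
              Nat.add_le_add_left (passVal_mono G true 0 _) 1
          _ ≤ passVal G false 1 D := le_passVal_false 1 hv
      | q + 1 =>
        apply passVal_false_le_succ
        · intro v hv
          calc 1 + passVal G true (q + 1) (D ∪ closedNbhd G v)
              ≤ 1 + passVal G true (q + 2) (D ∪ closedNbhd G v) :=
                Nat.add_le_add_left (passVal_mono G true (q + 1) _) 1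
            _ ≤ passVal G false (q + 2) D := le_passVal_false (q + 2) hv
        · calc passVal G true q D ≤ passVal G true (q + 1) D :=
              passVal_mono G true q D
            _ ≤ passVal G false (q + 2) D := pass_branch G (q + 1) D
  termination_by ((Finset.univ \ D).card, p)
  decreasing_by
  · exact Prod.Lex.left _ _ (card_lt_of_legal G hv)
  · exact Prod.Lex.left _ _ (card_lt_of_legal G hv)
  · exact Prod.Lex.left _ _ (card_lt_of_legal G hv)
  · exact Prod.Lex.right _ (Nat.lt_succ_self q)

end Aux2
section Aux3
variable [Fintype V]

lemma card_le_of_sdiff {D₁ D₂ : Finset V} (h : D₁ ⊆ D₂) :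
    (Finset.univ \ D₂).card ≤ (Finset.univ \ D₁).card :=
  Finset.card_le_card (Finset.sdiff_subset_sdiff (le_refl _) h)

lemma pass_package : ∀ n : ℕ, ∀ G : SimpleGraph V,
    (∀ p : ℕ, ∀ D₁ D₂ : Finset V, (Finset.univ \ D₁).card ≤ n → D₁ ⊆ D₂ →
      passVal G true p D₂ ≤ passVal G true p D₁ ∧
      passVal G false p D₂ ≤ passVal G false p D₁) ∧
    (∀ p : ℕ, ∀ D : Finset V, (Finset.univ \ D).card ≤ n →
      passVal G false p D ≤ passVal G true p D + 1 ∧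
      passVal G true p D ≤ passVal G false p D + 1) := by
  intro n
  induction n with
  | zero =>
    intro G
    have huniv : ∀ D : Finset V, (Finset.univ \ D).card ≤ 0 → D = Finset.univ := by
      intro D hD
      have he : Finset.univ \ D = ∅ := Finset.card_eq_zero.1 (Nat.le_zero.1 hD)
      have h2 : (Finset.univ : Finset V) ⊆ D := by
        intro x hx
        by_contra hxD
        have hmem : x ∈ Finset.univ \ D := Finset.mem_sdiff.2 ⟨hx, hxD⟩
        rw [he] at hmem
        exact absurd hmem (Finset.notMem_empty x)
      exact Finset.univ_subset_iff.1 h2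
    constructor
    · intro p D₁ D₂ hc hsub
      have h1 := huniv D₁ hc
      subst h1
      have h2 : D₂ = Finset.univ := Finset.univ_subset_iff.1 (by simpa using hsub)
      subst h2
      simp [passVal_univ]
    · intro p D hc
      have h1 := huniv D hc
      subst h1
      simp [passVal_univ]
  | succ n ih =>
    intro G
    obtain ⟨ihCP, ihS⟩ := ih G
    -- CP for true
    have hCPt : ∀ p : ℕ, ∀ D₁ D₂ : Finset V, (Finset.univ \ D₁).card ≤ n + 1 →
        D₁ ⊆ D₂ → passVal G true p D₂ ≤ passVal G true p D₁ := by
      intro p D₁ D₂ hc hsub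
      by_cases hD₂ : D₂ = Finset.univ
      · subst hD₂; rw [passVal_univ]; exact Nat.zero_le _
      · have hD₁ : D₁ ≠ Finset.univ := by
          intro h; subst h
          exact hD₂ (Finset.univ_subset_iff.1 (by simpa using hsub))
        obtain ⟨v, hv, heq⟩ := passVal_true_exists (G := G) (D := D₁) p hD₁
        have hcard1 : (Finset.univ \ (D₁ ∪ closedNbhd G v)).card ≤ n := by
          have := card_lt_of_legal G hv
          omega
        by_cases hleg : v ∈ legalMoves G D₂
        · calc passVal G true p D₂
              ≤ 1 + passVal G false p (D₂ ∪ closedNbhd G v) := passVal_true_le p hleg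
            _ ≤ 1 + passVal G false p (D₁ ∪ closedNbhd G v) := by
                have := (ihCP p (D₁ ∪ closedNbhd G v) (D₂ ∪ closedNbhd G v) hcard1
                  (Finset.union_subset_union hsub (le_refl _))).2
                omega
            _ = passVal G true p D₁ := heq.symm
        · have hNsub : closedNbhd G v ⊆ D₂ := not_legal_iff.1 hleg
          have hsub2 : D₁ ∪ closedNbhd G v ⊆ D₂ := Finset.union_subset hsub hNsub
          have hcard2 : (Finset.univ \ D₂).card ≤ n :=
            le_trans (card_le_of_sdiff hsub2) hcard1
          calc passVal G true p D₂ ≤ passVal G false p D₂ + 1 := (ihS p D₂ hcard2).2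
            _ ≤ passVal G false p (D₁ ∪ closedNbhd G v) + 1 := by
                have := (ihCP p (D₁ ∪ closedNbhd G v) D₂ hcard1 hsub2).2
                omega
            _ = passVal G true p D₁ := by omega
    -- CP for false
    have hCPf : ∀ p : ℕ, ∀ D₁ D₂ : Finset V, (Finset.univ \ D₁).card ≤ n + 1 →
        D₁ ⊆ D₂ → passVal G false p D₂ ≤ passVal G false p D₁ := by
      intro p D₁ D₂ hc hsub
      by_cases hD₂ : D₂ = Finset.univ
      · subst hD₂; rw [passVal_univ]; exact Nat.zero_le _
      · have hkey : ∀ q : ℕ, ∀ v ∈ legalMoves G D₂,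
            1 + passVal G true q (D₂ ∪ closedNbhd G v) ≤ passVal G false q D₁ := by
          intro q v hv
          have hv₁ : v ∈ legalMoves G D₁ := by
            rw [mem_legal_iff] at hv ⊢
            exact fun h => hv (h.trans hsub)
          have hcard1 : (Finset.univ \ (D₁ ∪ closedNbhd G v)).card ≤ n := by
            have := card_lt_of_legal G hv₁
            omega
          calc 1 + passVal G true q (D₂ ∪ closedNbhd G v)
              ≤ 1 + passVal G true q (D₁ ∪ closedNbhd G v) := by
                have := (ihCP q (D₁ ∪ closedNbhd G v) (D₂ ∪ closedNbhd G v) hcard1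
                  (Finset.union_subset_union hsub (le_refl _))).1
                omega
            _ ≤ passVal G false q D₁ := le_passVal_false q hv₁
        match p with
        | 0 => exact passVal_false_le_zero (hkey 0)
        | q + 1 =>
          refine passVal_false_le_succ (hkey (q + 1)) ?_
          calc passVal G true q D₂ ≤ passVal G true q D₁ := hCPt q D₁ D₂ hc hsub
            _ ≤ passVal G false (q + 1) D₁ := pass_branch G q D₁
    -- S2 : false ≤ true + 1
    have hS2 : ∀ p : ℕ, ∀ D : Finset V, (Finset.univ \ D).card ≤ n + 1 →
        passVal G false p D ≤ passVal G true p D + 1 := by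
      intro p D hc
      have hkey : ∀ q : ℕ, ∀ v ∈ legalMoves G D,
          1 + passVal G true q (D ∪ closedNbhd G v) ≤ passVal G true q D + 1 := by
        intro q v hv
        have := hCPt q D (D ∪ closedNbhd G v) hc Finset.subset_union_left
        omega
      match p with
      | 0 => exact passVal_false_le_zero (hkey 0)
      | q + 1 =>
        refine passVal_false_le_succ (hkey (q + 1)) ?_
        have := passVal_mono G true q D
        omega
    -- S1 : true ≤ false + 1
    have hS1 : ∀ p : ℕ, ∀ D : Finset V, (Finset.univ \ D).card ≤ n + 1 →
        passVal G true p D ≤ passVal G false p D + 1 := by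
      intro p D hc
      by_cases hD : D = Finset.univ
      · subst hD; simp [passVal_univ]
      · obtain ⟨v, hv, heq⟩ := passVal_true_exists (G := G) (D := D) p hD
        have hcard1 : (Finset.univ \ (D ∪ closedNbhd G v)).card ≤ n := by
          have := card_lt_of_legal G hv
          omega
        have h2 := (ihS p (D ∪ closedNbhd G v) hcard1).1
        have h3 := le_passVal_false (G := G) p hv
        omega
    exact ⟨fun p D₁ D₂ hc hsub => ⟨hCPt p D₁ D₂ hc hsub, hCPf p D₁ D₂ hc hsub⟩,
      fun p D hc => ⟨hS2 p D hc, hS1 p D hc⟩⟩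

lemma passVal_S1 (G : SimpleGraph V) (p : ℕ) (D : Finset V) :
    passVal G true p D ≤ passVal G false p D + 1 :=
  ((pass_package (Finset.univ \ D).card G).2 p D (le_refl _)).2

end Aux3
section Aux4
variable [Fintype V]

lemma passVal_le_zero_add (G : SimpleGraph V) (t : Bool) (p : ℕ) (D : Finset V) :
    passVal G t p D ≤ passVal G t 0 D + p := by
  by_cases hD : D = Finset.univ
  · subst hD; rw [passVal_univ, passVal_univ]; exact Nat.zero_le _
  · match t with
    | true =>
      obtain ⟨v, hv, heq⟩ := passVal_true_exists (G := G) (D := D) 0 hD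
      have h1 := passVal_true_le (G := G) (D := D) (v := v) p hv
      have h2 := passVal_le_zero_add G false p (D ∪ closedNbhd G v)
      omega
    | false =>
      match p with
      | 0 => omega
      | q + 1 =>
        refine passVal_false_le_succ ?_ ?_
        · intro v hv
          have h1 := passVal_le_zero_add G true (q + 1) (D ∪ closedNbhd G v)
          have h2 := le_passVal_false (G := G) (D := D) (v := v) 0 hv
          omega
        · have h1 := passVal_le_zero_add G true q D
          have h2 := passVal_S1 G 0 D
          omega
  termination_by ((Finset.univ \ D).card, p)
  decreasing_by
  · exact Prod.Lex.left _ _ (card_lt_of_legal G hv)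
  · exact Prod.Lex.left _ _ (card_lt_of_legal G hv)
  · exact Prod.Lex.right _ (Nat.lt_succ_self q)

lemma gameVal_eq_pass0 (G : SimpleGraph V) (t : Bool) (D : Finset V) :
    gameVal G t D = passVal G t 0 D := by
  by_cases hD : D = Finset.univ
  · rw [gameVal, passVal]; simp [hD]
  · rw [gameVal, passVal, dif_neg hD, dif_neg hD]
    have hne : (legalMoves G D).attach.Nonempty :=
      (Finset.attach_nonempty_iff).2 (legalMoves_nonempty G hD)
    match t with
    | true =>
      simp only [if_true]
      refine congrArg (1 + ·) (Finset.inf'_congr hne rfl ?_)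
      intro v hv
      exact gameVal_eq_pass0 G false (D ∪ closedNbhd G v.1)
    | false =>
      simp only [if_false, Bool.false_eq_true, ite_false]
      refine congrArg (1 + ·) (Finset.sup'_congr hne rfl ?_)
      intro v hv
      exact gameVal_eq_pass0 G true (D ∪ closedNbhd G v.1)
  termination_by (Finset.univ \ D).card
  decreasing_by
  · exact card_lt_of_legal G v.2
  · exact card_lt_of_legal G v.2

end Aux4
section Aux5
variable [Fintype V]

lemma closedNbhd_del_subset (G : SimpleGraph V) (C : Set (Sym2 V)) (v : V) :
    closedNbhd (G.deleteEdges C) v ⊆ closedNbhd G v := by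
  intro u hu
  simp only [closedNbhd, Finset.mem_filter, Finset.mem_univ, true_and,
    SimpleGraph.deleteEdges_adj] at hu ⊢
  tauto

lemma sym2_set_finite (s : Set (Sym2 V)) : s.Finite := by
  haveI : Finite V := Finite.of_fintype V
  haveI : Finite (Sym2 V) := Quot.finite _
  exact Set.toFinite s

lemma main_claim (G : SimpleGraph V) (C : Set (Sym2 V)) (t : Bool) (p : ℕ)
    (D D' : Finset V) (h1 : D' ⊆ D)
    (h2 : {e | e ∈ C ∧ ∃ x ∈ e, x ∉ D}.ncard ≤ p) :
    passVal G t 0 D ≤ passVal (G.deleteEdges C) t p D' + p := by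
  by_cases hD : D = Finset.univ
  · subst hD; rw [passVal_univ]; exact Nat.zero_le _
  · have hD' : D' ≠ Finset.univ := by
      intro h
      exact hD (Finset.univ_subset_iff.1 (h ▸ h1))
    match t with
    | true =>
      obtain ⟨v, hv, heq⟩ :=
        passVal_true_exists (G := G.deleteEdges C) (D := D') p hD'
      by_cases hreal : v ∈ legalMoves G D
      · have hle := passVal_true_le (G := G) (D := D) (v := v) 0 hreal
        have hmono : {e | e ∈ C ∧ ∃ x ∈ e, x ∉ D ∪ closedNbhd G v}.ncard ≤ p := by
          refine le_trans (Set.ncard_le_ncard ?_ (sym2_set_finite _)) h2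
          rintro e ⟨heC, x, hxe, hx⟩
          exact ⟨heC, x, hxe, fun hxD => hx (Finset.mem_union_left _ hxD)⟩
        have hrec := main_claim G C false p (D ∪ closedNbhd G v)
          (D' ∪ closedNbhd (G.deleteEdges C) v)
          (Finset.union_subset_union h1 (closedNbhd_del_subset G C v)) hmono
        omega
      · have hN : closedNbhd G v ⊆ D := not_legal_iff.1 hreal
        have hsub2 : D' ∪ closedNbhd (G.deleteEdges C) v ⊆ D :=
          Finset.union_subset h1 ((closedNbhd_del_subset G C v).trans hN)
        have hrec := main_claim G C true p D
          (D' ∪ closedNbhd (G.deleteEdges C) v) hsub2 h2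
        have hS1 := passVal_S1 (G.deleteEdges C) p
          (D' ∪ closedNbhd (G.deleteEdges C) v)
        omega
    | false =>
      refine passVal_false_le_zero ?_
      intro s hs
      by_cases himg : closedNbhd (G.deleteEdges C) s ⊆ D'
      · -- event case
        obtain ⟨y, hyN, hyD⟩ := Finset.not_subset.1 (mem_legal_iff.1 hs)
        have hsD' : s ∈ D' := himg (mem_closedNbhd_self _ s)
        have hsD : s ∈ D := h1 hsD'
        have hys : y ≠ s := fun h => hyD (h ▸ hsD)
        have hadj : G.Adj s y := by
          simp only [closedNbhd, Finset.mem_filter, Finset.mem_univ, true_and] at hyN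
          rcases hyN with h | h
          · exact absurd h hys
          · exact h
        have hnotN' : y ∉ closedNbhd (G.deleteEdges C) s := fun h => hyD (h1 (himg h))
        have hC : s(s, y) ∈ C := by
          by_contra hc
          apply hnotN'
          simp only [closedNbhd, Finset.mem_filter, Finset.mem_univ, true_and,
            SimpleGraph.deleteEdges_adj]
          exact Or.inr ⟨hadj, hc⟩
        have hec : s(s, y) ∈ {e | e ∈ C ∧ ∃ x ∈ e, x ∉ D} :=
          ⟨hC, y, Sym2.mem_mk_right s y, hyD⟩
        have hlt : {e | e ∈ C ∧ ∃ x ∈ e, x ∉ D ∪ closedNbhd G s} ⊂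
            {e | e ∈ C ∧ ∃ x ∈ e, x ∉ D} := by
          constructor
          · rintro e ⟨heC, x, hxe, hx⟩
            exact ⟨heC, x, hxe, fun hxD => hx (Finset.mem_union_left _ hxD)⟩
          · intro hcon
            obtain ⟨heC, x, hxe, hx⟩ := hcon hec
            rw [Sym2.mem_iff] at hxe
            rcases hxe with rfl | rfl
            · exact hx (Finset.mem_union_left _ hsD)
            · exact hx (Finset.mem_union_right _ hyN)
        have hpos : 0 < {e | e ∈ C ∧ ∃ x ∈ e, x ∉ D}.ncard :=
          (Set.ncard_pos (sym2_set_finite _)).2 ⟨_, hec⟩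
        obtain ⟨q, rfl⟩ : ∃ q, p = q + 1 := ⟨p - 1, by omega⟩
        have hcard : {e | e ∈ C ∧ ∃ x ∈ e, x ∉ D ∪ closedNbhd G s}.ncard ≤ q := by
          have := Set.ncard_lt_ncard hlt (sym2_set_finite _)
          omega
        have hrec := main_claim G C true q (D ∪ closedNbhd G s) D'
          (h1.trans Finset.subset_union_left) hcard
        have hpb := pass_branch (G.deleteEdges C) q D'
        omega
      · have hs' : s ∈ legalMoves (G.deleteEdges C) D' := mem_legal_iff.2 himg
        have hmono : {e | e ∈ C ∧ ∃ x ∈ e, x ∉ D ∪ closedNbhd G s}.ncard ≤ p := by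
          refine le_trans (Set.ncard_le_ncard ?_ (sym2_set_finite _)) h2
          rintro e ⟨heC, x, hxe, hx⟩
          exact ⟨heC, x, hxe, fun hxD => hx (Finset.mem_union_left _ hxD)⟩
        have hrec := main_claim G C true p (D ∪ closedNbhd G s)
          (D' ∪ closedNbhd (G.deleteEdges C) s)
          (Finset.union_subset_union h1 (closedNbhd_del_subset G C s)) hmono
        have hle := le_passVal_false (G := G.deleteEdges C) (D := D') (v := s) p hs'
        omega
  termination_by ((Finset.univ \ D).card, (Finset.univ \ D').card)
  decreasing_by
  · exact Prod.Lex.left _ _ (card_lt_of_legal G hreal)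
  · exact Prod.Lex.right _ (card_lt_of_legal (G.deleteEdges C) hv)
  · exact Prod.Lex.left _ _ (card_lt_of_legal G hs)
  · exact Prod.Lex.left _ _ (card_lt_of_legal G hs)

end Aux5
/-- If `G` is connected, then `γ_g(G)` is at most `γ_g(G \ C) + 2|C|` for every minimal
edge cut `C` of `G` (hence at most the minimum of these quantities over all minimal
edge cuts). -/
theorem stmt4 {V : Type*} [Fintype V] (G : SimpleGraph V) (hG : G.Connected) :
    ∀ C : Set (Sym2 V), IsMinimalEdgeCut G C →
      gammaG G ∅ ≤ gammaG (G.deleteEdges C) ∅ + 2 * C.ncard := by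
  intro C hC
  have h2 : {e | e ∈ C ∧ ∃ x ∈ e, x ∉ (∅ : Finset V)}.ncard ≤ C.ncard :=
    Set.ncard_le_ncard (fun e he => he.1) (sym2_set_finite C)
  have hmain := main_claim G C true C.ncard ∅ ∅ (subset_refl _) h2
  have hple := passVal_le_zero_add (G.deleteEdges C) true C.ncard ∅
  unfold gammaG
  rw [gameVal_eq_pass0, gameVal_eq_pass0]
  omega
end

section
/- Continuation Principle: if G is a graph with vertex subsets A and B satisfying B \subseteq A, then \gamma_g(G|A) \le \gamma_g(G|B) and \gamma_g'(G|A) \le \gamma_g'(G|B). -/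
open Finset
open scoped Classical

variable {V : Type*}

/-!
Dominator playing on `G|A` imitates an optimal strategy for `G|B`: a move legal on `G|B`
is either still legal on `G|A`, or its closed neighbourhood is already dominated there, in
which case any legal move does at least as well. Staller, on the other hand, has no more
moves on `G|A` than on `G|B`. Induction on the number of undominated vertices of `G|B`
then shows that the game on `G|A` is never longer.
-/

section Continuation

variable [Fintype V] (G : SimpleGraph V)

lemma legalMoves_anti {A B : Finset V} (h : B ⊆ A) : legalMoves G A ⊆ legalMoves G B := by
  intro v hv
  simp only [legalMoves, mem_filter, mem_univ, true_and] at hv ⊢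
  exact fun hvB => hv (hvB.trans h)

lemma ne_univ_of_mem_legalMoves {D : Finset V} {v : V} (hv : v ∈ legalMoves G D) :
    D ≠ univ := by
  rintro rfl
  simp [legalMoves] at hv

lemma gameVal_univ_s8 (t : Bool) : gameVal G t univ = 0 := by
  rw [gameVal, dif_pos rfl]

lemma gameVal_true_le {D : Finset V} {v : V} (hv : v ∈ legalMoves G D) :
    gameVal G true D ≤ 1 + gameVal G false (D ∪ closedNbhd G v) := by
  rw [gameVal.eq_1 G true D, dif_neg (ne_univ_of_mem_legalMoves G hv), if_pos rfl]
  gcongr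
  exact inf'_le (fun w : legalMoves G D => gameVal G false (D ∪ closedNbhd G w.1))
    (mem_attach _ ⟨v, hv⟩)

lemma le_gameVal_true {D : Finset V} (hD : D ≠ univ) {n : ℕ}
    (h : ∀ v ∈ legalMoves G D, n ≤ 1 + gameVal G false (D ∪ closedNbhd G v)) :
    n ≤ gameVal G true D := by
  rw [gameVal.eq_1 G true D, dif_neg hD, if_pos rfl]
  obtain ⟨v, -, hv⟩ := exists_mem_eq_inf' _
    fun w : legalMoves G D => gameVal G false (D ∪ closedNbhd G w.1)
  exact hv ▸ h v v.2

lemma le_gameVal_false {D : Finset V} {v : V} (hv : v ∈ legalMoves G D) :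
    1 + gameVal G true (D ∪ closedNbhd G v) ≤ gameVal G false D := by
  rw [gameVal.eq_1 G false D, dif_neg (ne_univ_of_mem_legalMoves G hv),
    if_neg Bool.false_ne_true]
  gcongr
  exact le_sup' (fun w : legalMoves G D => gameVal G true (D ∪ closedNbhd G w.1))
    (mem_attach _ ⟨v, hv⟩)

lemma gameVal_false_le {D : Finset V} {n : ℕ}
    (h : ∀ v ∈ legalMoves G D, 1 + gameVal G true (D ∪ closedNbhd G v) ≤ n) :
    gameVal G false D ≤ n := by
  by_cases hD : D = univ
  · rw [hD, gameVal_univ_s8]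
    exact n.zero_le
  rw [gameVal.eq_1 G false D, dif_neg hD, if_neg Bool.false_ne_true]
  obtain ⟨v, -, hv⟩ := exists_mem_eq_sup' _
    fun w : legalMoves G D => gameVal G true (D ∪ closedNbhd G w.1)
  exact hv ▸ h v v.2

lemma exists_legalMoves_union_superset {A B : Finset V} (h : B ⊆ A) (hA : A ≠ univ) (v : V) :
    ∃ w ∈ legalMoves G A, B ∪ closedNbhd G v ⊆ A ∪ closedNbhd G w := by
  by_cases hvA : v ∈ legalMoves G A
  · exact ⟨v, hvA, union_subset_union h subset_rfl⟩
  · obtain ⟨w, hw⟩ := legalMoves_nonempty G hA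
    have hNv : closedNbhd G v ⊆ A := by simpa [legalMoves] using hvA
    exact ⟨w, hw, (union_subset h hNv).trans subset_union_left⟩

theorem gameVal_anti (t : Bool) {A B : Finset V} (h : B ⊆ A) :
    gameVal G t A ≤ gameVal G t B := by
  cases t
  · refine gameVal_false_le G fun w hw => ?_
    have hwB := legalMoves_anti G h hw
    calc 1 + gameVal G true (A ∪ closedNbhd G w)
        ≤ 1 + gameVal G true (B ∪ closedNbhd G w) := by
          gcongr 1 + ?_
          exact gameVal_anti true (union_subset_union h subset_rfl)
      _ ≤ gameVal G false B := le_gameVal_false G hwB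
  · by_cases hA : A = univ
    · simp [hA, gameVal_univ_s8]
    refine le_gameVal_true G (fun hB => hA (univ_subset_iff.1 (hB ▸ h))) fun v hv => ?_
    obtain ⟨w, hw, hsub⟩ := exists_legalMoves_union_superset G h hA v
    calc gameVal G true A ≤ 1 + gameVal G false (A ∪ closedNbhd G w) := gameVal_true_le G hw
      _ ≤ 1 + gameVal G false (B ∪ closedNbhd G v) := by
          gcongr 1 + ?_
          exact gameVal_anti false hsub
termination_by (univ \ B).card
decreasing_by all_goals exact card_lt_of_legal G ‹_›

end Continuation

/-- Continuation Principle: if `B ⊆ A` then `γ_g(G|A) ≤ γ_g(G|B)` and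
`γ_g'(G|A) ≤ γ_g'(G|B)`. -/
theorem stmt8 {V : Type*} [Fintype V] (G : SimpleGraph V) (A B : Finset V)
    (h : B ⊆ A) :
    gammaG G A ≤ gammaG G B ∧ gammaG' G A ≤ gammaG' G B :=
  ⟨gameVal_anti G true h, gameVal_anti G false h⟩
end
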